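/- (First Abel inversion theorem.) Let a, g : ℕ → ℝ with a_0 = g_0 = 1 and let m be an integer. For an integer p and s ≥ 0, write P_s^{(p)}(g) = ∑_{μ ⊢ s} (p)_{ν_μ} d_μ g_μ, with P_0^{(p)}(g) = 1. Then the following are equivalent: (i) for every i ≥ 1, a_i = ∑_{j=0}^{i−1} binom(i−1,j) g_{j+1} P_{i−1−j}^{(m)}(g); (ii) for every i ≥ 1, g_i = ∑_{j=0}^{i−1} binom(i−1,j) a_{j+1} P_{i−1−j}^{(−m)}(g). -/

import Mathlib

/-! With `E f = ∑ₙ f n Xⁿ / n!` the exponential generating function, removing one part `t` from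
a partition and using `(x + 1)_ν = (x)_ν + ν (x)_{ν-1}` gives the recurrence
`P^{(x+1)}_s = ∑_t binom(s,t) g_t P^{(x)}_{s-t}`, i.e. `E(P^{(x+1)}) = E(g) E(P^{(x)})`.
Since `P^{(0)}` is the unit sequence, `E(P^{(m)}) E(P^{(-m)}) = 1` for every integer `m`.
With `f' n = f (n + 1)`, condition (i) reads `E(a') = E(g') E(P^{(m)})` and (ii) reads
`E(g') = E(a') E(P^{(-m)})`, which are equivalent because the two series are mutually inverse. -/

open Finset Polynomial

/-- `dcoef μ = s! / ((1!)^{r_1}(2!)^{r_2}⋯ r_1! r_2! ⋯)`, the number of set partitions of an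
`s`-element set whose block sizes are the parts of the integer partition `μ`. -/
noncomputable def dcoef {s : ℕ} (mu : Nat.Partition s) : ℝ :=
  (Nat.factorial s : ℝ) /
    ((mu.parts.map fun p => (Nat.factorial p : ℝ)).prod *
     ∏ j ∈ mu.parts.toFinset, (Nat.factorial (mu.parts.count j) : ℝ))

open scoped Nat PowerSeries

section ExponentialGeneratingFunction

variable {K : Type*} [Field K] [CharZero K]

def binomConv (f h : ℕ → K) (n : ℕ) : K :=
  ∑ k ∈ range (n + 1), (n.choose k : K) * f k * h (n - k)

def egf (f : ℕ → K) : K⟦X⟧ :=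
  PowerSeries.mk fun n => f n / n !

theorem egf_injective : Function.Injective (egf (K := K)) := by
  intro f h hfh
  funext n
  have hn := congrArg (PowerSeries.coeff n) hfh
  simp only [egf, PowerSeries.coeff_mk] at hn
  exact (div_left_inj' (Nat.cast_ne_zero.2 n.factorial_ne_zero)).1 hn

theorem egf_binomConv (f h : ℕ → K) : egf (binomConv f h) = egf f * egf h := by
  ext n
  rw [PowerSeries.coeff_mul, Nat.sum_antidiagonal_eq_sum_range_succ
    (fun i j => PowerSeries.coeff i (egf f) * PowerSeries.coeff j (egf h))]
  simp only [egf, binomConv, PowerSeries.coeff_mk, sum_div]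
  refine sum_congr rfl fun k hk => ?_
  have hkn : k ≤ n := Nat.lt_succ_iff.1 (mem_range.1 hk)
  have hchoose : (n.choose k : K) * k ! * (n - k)! = n ! := by
    exact_mod_cast Nat.choose_mul_factorial_mul_factorial hkn
  have hchoose_ne : (n.choose k : K) ≠ 0 := Nat.cast_ne_zero.2 (Nat.choose_pos hkn).ne'
  rw [← hchoose]
  field_simp

theorem forall_eq_sum_choose_iff_egf (a b c : ℕ → K) :
    (∀ i : ℕ, 1 ≤ i → a i = ∑ j ∈ range i, ((i - 1).choose j : K) * b (j + 1) * c (i - 1 - j)) ↔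
      egf (fun n => a (n + 1)) = egf (fun n => b (n + 1)) * egf c := by
  rw [← egf_binomConv, egf_injective.eq_iff, funext_iff]
  constructor
  · intro h n
    simpa [binomConv] using h (n + 1) (Nat.le_add_left 1 n)
  · intro h i hi
    obtain ⟨n, rfl⟩ := Nat.exists_eq_add_of_le' hi
    simpa [binomConv] using h n

end ExponentialGeneratingFunction

theorem descPochhammer_eval_add_one {R : Type*} [CommRing R] (k : ℕ) (x : R) :
    (descPochhammer R k).eval (x + 1) =
      (descPochhammer R k).eval x + k * (descPochhammer R (k - 1)).eval x := by
  cases k with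
  | zero => simp
  | succ n =>
    rw [descPochhammer_succ_eval n x, descPochhammer_succ_left]
    simp only [eval_mul, eval_X, eval_comp, eval_sub, eval_one, add_sub_cancel_right,
      Nat.add_sub_cancel, Nat.cast_add, Nat.cast_one]
    ring

theorem Multiset.prod_factorial_count_cons (t : ℕ) (M : Multiset ℕ) :
    ∏ j ∈ (t ::ₘ M).toFinset, ((t ::ₘ M).count j)! =
      (M.count t + 1) * ∏ j ∈ M.toFinset, (M.count j)! := by
  have hsub : M.toFinset ⊆ (t ::ₘ M).toFinset := by simp [Finset.subset_insert]
  have ht : t ∈ (t ::ₘ M).toFinset := by simp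
  rw [prod_subset (f := fun j => (M.count j)!) hsub fun j _ hj => by
      simp [Multiset.count_eq_zero.2 (by simpa using hj)],
    ← mul_prod_erase _ _ ht, ← mul_prod_erase _ (fun j => (M.count j)!) ht,
    Multiset.count_cons_self, Nat.factorial_succ, mul_assoc]
  congr 2
  exact prod_congr rfl fun j hj => by rw [Multiset.count_cons_of_ne (ne_of_mem_erase hj)]

theorem dcoef_partitionWithPartEquiv_symm {s t : ℕ} (ht : 1 ≤ t) (hts : t ≤ s)
    (μ : Nat.Partition (s - t)) :
    ((μ.parts.count t : ℝ) + 1) * dcoef ((Nat.Partition.partitionWithPartEquiv ht hts).symm μ).1 =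
      s.choose t * dcoef μ := by
  have hfactorials : ((Multiset.map (fun p => (p ! : ℝ)) μ.parts).prod) ≠ 0 :=
    Multiset.prod_ne_zero (by simp [Nat.factorial_ne_zero])
  have hcounts : ∏ j ∈ μ.parts.toFinset, ((μ.parts.count j)! : ℝ) ≠ 0 :=
    prod_ne_zero_iff.2 fun j _ => Nat.cast_ne_zero.2 (Nat.factorial_ne_zero _)
  have hcount_cons := congrArg (Nat.cast (R := ℝ)) (Multiset.prod_factorial_count_cons t μ.parts)
  push_cast at hcount_cons
  have hs : (s ! : ℝ) = s.choose t * t ! * (s - t)! := by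
    exact_mod_cast (Nat.choose_mul_factorial_mul_factorial hts).symm
  simp only [dcoef, Nat.Partition.partitionWithPartEquiv_symm_apply_parts, Multiset.map_cons,
    Multiset.prod_cons, hcount_cons, hs]
  field_simp

theorem sum_card_parts_mul {R : Type*} [CommSemiring R] {s : ℕ} (f : Nat.Partition s → R) :
    ∑ μ, (μ.parts.card : R) * f μ =
      ∑ t ∈ Ico 1 (s + 1), ∑ μ with t ∈ μ.parts, (μ.parts.count t : R) * f μ := by
  simp_rw [← Multiset.toFinset_sum_count_eq, Nat.cast_sum, sum_mul]
  refine sum_comm' fun μ t => ?_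
  simp only [Multiset.mem_toFinset, mem_univ, true_and, mem_filter, mem_Ico]
  constructor
  · intro ht
    exact ⟨ht, μ.parts_pos ht, Nat.lt_succ_of_le (Nat.Partition.le_of_mem_parts ht)⟩
  · exact fun h => h.1

section PartitionMoment

variable (g : ℕ → ℝ)

noncomputable def partitionMoment (x : ℝ) (s : ℕ) : ℝ :=
  ∑ μ : Nat.Partition s, (descPochhammer ℝ μ.parts.card).eval x * dcoef μ * (μ.parts.map g).prod

theorem egf_partitionMoment_zero : egf (partitionMoment g 0) = 1 := by
  ext s
  rcases s with _ | s
  · simp [egf, partitionMoment, dcoef]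
  · have hvanish : partitionMoment g 0 (s + 1) = 0 := sum_eq_zero fun μ _ => by
      have hcard : μ.parts.card ≠ 0 := fun h => by
        simpa [Multiset.card_eq_zero.1 h] using μ.parts_sum
      simp [descPochhammer_ne_zero_eval_zero _ hcard]
    simp [egf, hvanish]

theorem sum_mem_parts_count_mul (x : ℝ) {s t : ℕ} (ht : 1 ≤ t) (hts : t ≤ s) :
    ∑ μ : Nat.Partition s with t ∈ μ.parts, (μ.parts.count t : ℝ) *
        ((descPochhammer ℝ (μ.parts.card - 1)).eval x * dcoef μ * (μ.parts.map g).prod) =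
      s.choose t * g t * partitionMoment g x (s - t) := by
  rw [partitionMoment, mul_sum, sum_subtype _ (p := fun μ => t ∈ μ.parts) (fun μ => by simp),
    ← (Nat.Partition.partitionWithPartEquiv ht hts).symm.sum_comp]
  refine sum_congr rfl fun μ _ => ?_
  have hdcoef := dcoef_partitionWithPartEquiv_symm ht hts μ
  simp only [Nat.Partition.partitionWithPartEquiv_symm_apply_parts, Multiset.count_cons_self,
    Multiset.card_cons, Multiset.map_cons, Multiset.prod_cons, Nat.add_sub_cancel,
    Nat.cast_add, Nat.cast_one]
  linear_combination ((descPochhammer ℝ μ.parts.card).eval x * g t * (μ.parts.map g).prod) * hdcoef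

theorem partitionMoment_add_one (hg0 : g 0 = 1) (x : ℝ) :
    partitionMoment g (x + 1) = binomConv g (partitionMoment g x) := by
  funext s
  have hsplit : partitionMoment g (x + 1) s = partitionMoment g x s + ∑ μ : Nat.Partition s,
      (μ.parts.card : ℝ) *
        ((descPochhammer ℝ (μ.parts.card - 1)).eval x * dcoef μ * (μ.parts.map g).prod) := by
    simp only [partitionMoment, descPochhammer_eval_add_one, ← sum_add_distrib]
    exact sum_congr rfl fun μ _ => by ring
  rw [hsplit, sum_card_parts_mul, sum_congr rfl fun t ht => sum_mem_parts_count_mul g x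
      (mem_Ico.1 ht).1 (Nat.lt_succ_iff.1 (mem_Ico.1 ht).2),
    binomConv, range_eq_Ico, sum_eq_sum_Ico_succ_bot (Nat.succ_pos s)]
  simp [hg0]

theorem egf_partitionMoment_mul_neg (hg0 : g 0 = 1) (m : ℤ) :
    egf (partitionMoment g m) * egf (partitionMoment g ((-m : ℤ) : ℝ)) = 1 := by
  let F : ℤ → ℝ⟦X⟧ := fun n => egf (partitionMoment g n)
  have hF : ∀ n, F (n + 1) = egf g * F n := fun n => by
    simp only [F, Int.cast_add, Int.cast_one, partitionMoment_add_one g hg0, egf_binomConv]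
  have hstep : ∀ n, F (n + 1) * F (-(n + 1)) = F n * F (-n) := fun n => by
    rw [hF, show -n = -(n + 1) + 1 by ring, hF]
    ring
  change F m * F (-m) = 1
  induction m using Int.induction_on with
  | zero => simp [F, egf_partitionMoment_zero]
  | succ k ih => rwa [hstep]
  | pred k ih => rwa [← hstep, sub_add_cancel]

end PartitionMoment

theorem first_abel_inversion_general (a g : ℕ → ℝ) (hg0 : g 0 = 1) (m : ℤ)
    (P : ℤ → ℕ → ℝ)
    (hP : ∀ (p : ℤ) (s : ℕ), P p s = ∑ mu : Nat.Partition s,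
      (descPochhammer ℝ mu.parts.card).eval ((p : ℝ)) * dcoef mu * (mu.parts.map g).prod) :
    (∀ i : ℕ, 1 ≤ i →
        a i = ∑ j ∈ Finset.range i, ((i - 1).choose j : ℝ) * g (j + 1) * P m (i - 1 - j))
      ↔ (∀ i : ℕ, 1 ≤ i →
        g i = ∑ j ∈ Finset.range i, ((i - 1).choose j : ℝ) * a (j + 1) * P (-m) (i - 1 - j)) := by
  have hPeq : ∀ p : ℤ, P p = partitionMoment g p := fun p => funext (hP p)
  rw [forall_eq_sum_choose_iff_egf, forall_eq_sum_choose_iff_egf, hPeq, hPeq]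
  have hinv := egf_partitionMoment_mul_neg g hg0 m
  constructor
  · intro h
    linear_combination -egf (partitionMoment g ((-m : ℤ) : ℝ)) * h -
      egf (fun n => g (n + 1)) * hinv
  · intro h
    linear_combination -egf (partitionMoment g m) * h - egf (fun n => a (n + 1)) * hinv

/-- First Abel inversion theorem: with
`P_s^{(p)}(g) = ∑_{μ ⊢ s} (p)_{ν_μ} d_μ g_μ` (so `P_0^{(p)}(g) = 1`), one has
`a_i = ∑_{j=0}^{i−1} binom(i−1,j) g_{j+1} P^{(m)}_{i−1−j}(g)` for all `i ≥ 1` if and only if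
`g_i = ∑_{j=0}^{i−1} binom(i−1,j) a_{j+1} P^{(−m)}_{i−1−j}(g)` for all `i ≥ 1`. -/
theorem first_abel_inversion (a g : ℕ → ℝ) (ha0 : a 0 = 1) (hg0 : g 0 = 1) (m : ℤ)
    (P : ℤ → ℕ → ℝ)
    (hP : ∀ (p : ℤ) (s : ℕ), P p s = ∑ mu : Nat.Partition s,
      (descPochhammer ℝ mu.parts.card).eval ((p : ℝ)) * dcoef mu * (mu.parts.map g).prod) :
    (∀ i : ℕ, 1 ≤ i →
        a i = ∑ j ∈ Finset.range i, ((i - 1).choose j : ℝ) * g (j + 1) * P m (i - 1 - j))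
      ↔ (∀ i : ℕ, 1 ≤ i →
        g i = ∑ j ∈ Finset.range i, ((i - 1).choose j : ℝ) * a (j + 1) * P (-m) (i - 1 - j)) :=
  first_abel_inversion_general a g hg0 m P hP
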